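/- Let N₀, N₁, N₂, N₃ be pairwise commuting bounded normal operators on a complex Hilbert space H. Then the following are equivalent: (a) N₃ is unitary, N₁ = N₂*·N₃, ‖N₁‖ ≤ 1, N₀*·N₀ = I − N₁*·N₁ and N₀·N₀* = I − N₁·N₁*; (b) there exist pairwise commuting bounded normal operators A₁₁, A₁₂, A₂₁, A₂₂ on H such that the block operator matrix [[A₁₁, A₁₂],[A₂₁, A₂₂]], acting on H ⊕ H by (x,y) ↦ (A₁₁x + A₁₂y, A₂₁x + A₂₂y), is unitary, and (N₀, N₁, N₂, N₃) = (A₂₁, A₁₁, A₂₂, A₁₁·A₂₂ − A₁₂·A₂₁). -/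

import Mathlib

/-!
By the Fuglede–Putnam theorem, pairwise commuting normal operators also commute with each other's
adjoints, so they generate a commutative star subalgebra. Inside it both conditions become
polynomial identities in a commutative star ring. Given an `ℍ`-unitary, the matrix
`[[N₁, -N₀* N₃], [N₀, N₂]]` has orthonormal columns and rows and determinant `N₃`. Conversely, if a
block matrix with commuting normal entries has orthonormal columns, its determinant is unitary, the
adjugate formula gives `A₁₁ = A₂₂* · det`, and `A₁₁* A₁₁ + A₂₁* A₂₁ = 1` gives both defect
identities and, by positivity, `‖A₁₁‖ ≤ 1`.
-/

noncomputable section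

variable {H : Type*} [NormedAddCommGroup H] [InnerProductSpace ℂ H] [CompleteSpace H]

/-- The block operator matrix `[[A, B], [C, D]]` acting on the Hilbert space
`H ⊕ H` (i.e. `WithLp 2 (H × H)`) by `(x, y) ↦ (A x + B y, C x + D y)`. -/
def blockOp (A B C D : H →L[ℂ] H) :
    WithLp 2 (H × H) →L[ℂ] WithLp 2 (H × H) :=
  (((WithLp.prodContinuousLinearEquiv 2 ℂ H H).symm :
      (H × H) →L[ℂ] WithLp 2 (H × H)) ∘L
    ((A ∘L (ContinuousLinearMap.fst ℂ H H) + B ∘L (ContinuousLinearMap.snd ℂ H H)).prod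
       (C ∘L (ContinuousLinearMap.fst ℂ H H) + D ∘L (ContinuousLinearMap.snd ℂ H H)))) ∘L
    ((WithLp.prodContinuousLinearEquiv 2 ℂ H H : WithLp 2 (H × H) ≃L[ℂ] (H × H)) :
      WithLp 2 (H × H) →L[ℂ] (H × H))

section StarRing

variable {R : Type*} [Ring R] [StarRing R]

def OrthonormalColumns (a b c d : R) : Prop :=
  star a * a + star c * c = 1 ∧ star a * b + star c * d = 0 ∧
    star b * a + star d * c = 0 ∧ star b * b + star d * d = 1

def OrthonormalRows (a b c d : R) : Prop :=
  a * star a + b * star b = 1 ∧ a * star c + b * star d = 0 ∧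
    c * star a + d * star b = 0 ∧ c * star c + d * star d = 1

end StarRing

section CommStarRing

variable {R : Type*} [CommRing R] [StarRing R]

theorem orthonormal_of_hexablock {n₀ n₁ n₂ n₃ b : R} (h₃ : star n₃ * n₃ = 1)
    (h₁ : n₁ = star n₂ * n₃) (h₀ : star n₀ * n₀ = 1 - star n₁ * n₁) (hb : b = -(star n₀ * n₃)) :
    OrthonormalColumns n₁ b n₀ n₂ ∧ OrthonormalRows n₁ b n₀ n₂ ∧ n₃ = n₁ * n₂ - b * n₀ := by
  have h₁' : star n₁ = star n₃ * n₂ := by rw [h₁, star_mul, star_star]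
  subst hb
  simp only [OrthonormalColumns, OrthonormalRows, star_neg, star_mul, star_star]
  refine ⟨⟨?_, ?_, ?_, ?_⟩, ⟨?_, ?_, ?_, ?_⟩, ?_⟩
  · linear_combination h₀
  · linear_combination -(star n₀ * n₃) * h₁' - star n₀ * n₂ * h₃
  · linear_combination -(star n₃ * n₀) * h₁ - star n₂ * n₀ * h₃
  · linear_combination
      n₀ * star n₀ * h₃ + h₀ - star n₁ * h₁ - star n₂ * n₃ * h₁' - star n₂ * n₂ * h₃
  · linear_combination star n₀ * n₀ * h₃ + h₀
  · linear_combination star n₀ * h₁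
  · linear_combination n₀ * h₁'
  · linear_combination h₀ - star n₁ * h₁ - star n₂ * n₃ * h₁' - star n₂ * n₂ * h₃
  · linear_combination n₁ * n₂ * h₃ + n₁ * n₃ * h₁' - n₃ * h₀

theorem hexablock_of_orthonormalColumns {a b c d : R} (h : OrthonormalColumns a b c d) :
    star (a * d - b * c) * (a * d - b * c) = 1 ∧ (a * d - b * c) * star (a * d - b * c) = 1 ∧
      a = star d * (a * d - b * c) ∧ star c * c = 1 - star a * a ∧
      c * star c = 1 - a * star a := by
  obtain ⟨h₁, h₂, h₃, h₄⟩ := h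
  simp only [star_sub, star_mul]
  refine ⟨?_, ?_, ?_, ?_, ?_⟩
  · linear_combination (star b * b + star d * d) * h₁ + h₄ - (star a * b + star c * d) * h₃
  · linear_combination (star b * b + star d * d) * h₁ + h₄ - (star a * b + star c * d) * h₃
  · linear_combination -a * h₄ + b * h₃
  · linear_combination h₁
  · linear_combination h₁

end CommStarRing

namespace StarSubalgebra

variable {R A : Type*} [CommRing R] [StarRing R] [Ring A] [StarRing A] [Algebra R A]
  [StarModule R A] {S : StarSubalgebra R A}

theorem orthonormalColumns_coe {a b c d : S} :
    OrthonormalColumns (a : A) b c d ↔ OrthonormalColumns a b c d := by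
  simp [OrthonormalColumns, Subtype.ext_iff]

theorem orthonormalRows_coe {a b c d : S} :
    OrthonormalRows (a : A) b c d ↔ OrthonormalRows a b c d := by
  simp [OrthonormalRows, Subtype.ext_iff]

open scoped IsMulCommutative

variable [IsMulCommutative S]

theorem commute_of_mem {x y : A} (hx : x ∈ S) (hy : y ∈ S) : Commute x y :=
  setLike_mul_comm hx hy

theorem isStarNormal_of_mem {x : A} (hx : x ∈ S) : IsStarNormal x :=
  ⟨commute_of_mem (star_mem hx) hx⟩

theorem orthonormal_of_hexablock_of_mem {n₀ n₁ n₂ n₃ b : A} (m₀ : n₀ ∈ S) (m₁ : n₁ ∈ S)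
    (m₂ : n₂ ∈ S) (m₃ : n₃ ∈ S) (mb : b ∈ S) (h₃ : star n₃ * n₃ = 1) (h₁ : n₁ = star n₂ * n₃)
    (h₀ : star n₀ * n₀ = 1 - star n₁ * n₁) (hb : b = -(star n₀ * n₃)) :
    OrthonormalColumns n₁ b n₀ n₂ ∧ OrthonormalRows n₁ b n₀ n₂ ∧ n₃ = n₁ * n₂ - b * n₀ := by
  lift n₀ to S using m₀
  lift n₁ to S using m₁
  lift n₂ to S using m₂
  lift n₃ to S using m₃
  lift b to S using mb
  obtain ⟨hcols, hrows, hdet⟩ := orthonormal_of_hexablock (n₀ := n₀) (n₁ := n₁) (n₂ := n₂)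
    (n₃ := n₃) (b := b) (by push_cast [Subtype.ext_iff]; exact h₃)
    (by push_cast [Subtype.ext_iff]; exact h₁) (by push_cast [Subtype.ext_iff]; exact h₀)
    (by push_cast [Subtype.ext_iff]; exact hb)
  push_cast [Subtype.ext_iff] at hdet
  exact ⟨orthonormalColumns_coe.mpr hcols, orthonormalRows_coe.mpr hrows, hdet⟩

theorem hexablock_of_orthonormalColumns_of_mem {a b c d : A} (ma : a ∈ S) (mb : b ∈ S)
    (mc : c ∈ S) (md : d ∈ S) (h : OrthonormalColumns a b c d) :
    star (a * d - b * c) * (a * d - b * c) = 1 ∧ (a * d - b * c) * star (a * d - b * c) = 1 ∧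
      a = star d * (a * d - b * c) ∧ star c * c = 1 - star a * a ∧
      c * star c = 1 - a * star a := by
  lift a to S using ma
  lift b to S using mb
  lift c to S using mc
  lift d to S using md
  have := hexablock_of_orthonormalColumns (orthonormalColumns_coe.mp h)
  push_cast [Subtype.ext_iff] at this
  exact this

end StarSubalgebra

section CStarAlgebra

variable {A : Type*} [CStarAlgebra A]

theorem StarAlgebra.isMulCommutative_adjoin_of_pairwise_commute {s : Set A}
    (hcomm : s.Pairwise Commute) (hnormal : ∀ a ∈ s, IsStarNormal a) :
    IsMulCommutative (adjoin ℂ s) := by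
  have hcomm' : ∀ a ∈ s, ∀ b ∈ s, Commute a b := fun a ha b hb => by
    obtain rfl | hab := eq_or_ne a b
    · exact Commute.refl a
    · exact hcomm ha hb hab
  exact isMulCommutative_adjoin ℂ (fun a ha b hb => (hcomm' a ha b hb).eq)
    (fun a ha b hb => ((hnormal b hb).commute_star_right (hcomm' a ha b hb)).eq)

theorem exists_isMulCommutative_starSubalgebra_of_commute {a b c d : A} (hab : Commute a b)
    (hac : Commute a c) (had : Commute a d) (hbc : Commute b c) (hbd : Commute b d)
    (hcd : Commute c d) (ha : IsStarNormal a) (hb : IsStarNormal b) (hc : IsStarNormal c)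
    (hd : IsStarNormal d) :
    ∃ S : StarSubalgebra ℂ A, IsMulCommutative S ∧ a ∈ S ∧ b ∈ S ∧ c ∈ S ∧ d ∈ S := by
  refine ⟨StarAlgebra.adjoin ℂ {a, b, c, d},
    StarAlgebra.isMulCommutative_adjoin_of_pairwise_commute ?_ ?_, ?_⟩
  · simp [Set.pairwise_insert_of_symm, *]
  · simp [*]
  · have hsub := StarAlgebra.subset_adjoin ℂ ({a, b, c, d} : Set A)
    exact ⟨hsub (by simp), hsub (by simp), hsub (by simp), hsub (by simp)⟩

theorem CStarAlgebra.norm_le_one_of_star_mul_self_le_one [PartialOrder A] [StarOrderedRing A]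
    {a : A} (h : star a * a ≤ 1) : ‖a‖ ≤ 1 := by
  have := (norm_le_one_iff_of_nonneg (star a * a)).mpr h
  rw [CStarRing.norm_star_mul_self] at this
  nlinarith [norm_nonneg a]

end CStarAlgebra

theorem WithLp.prod_ext {p : ENNReal} {α β : Type*} {x y : WithLp p (α × β)}
    (h₁ : x.fst = y.fst) (h₂ : x.snd = y.snd) : x = y :=
  (WithLp.ext_iff p).mpr (Prod.ext h₁ h₂)

section BlockOperator

variable {E : Type*} [NormedAddCommGroup E] [InnerProductSpace ℂ E]

@[simp] theorem blockOp_apply_fst (A B C D : E →L[ℂ] E) (x : WithLp 2 (E × E)) :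
    (blockOp A B C D x).fst = A x.fst + B x.snd :=
  rfl

@[simp] theorem blockOp_apply_snd (A B C D : E →L[ℂ] E) (x : WithLp 2 (E × E)) :
    (blockOp A B C D x).snd = C x.fst + D x.snd :=
  rfl

theorem blockOp_mul (A B C D A' B' C' D' : E →L[ℂ] E) :
    blockOp A B C D * blockOp A' B' C' D' =
      blockOp (A * A' + B * C') (A * B' + B * D') (C * A' + D * C') (C * B' + D * D') := by
  ext x : 1
  apply WithLp.prod_ext <;>
    simp only [mul_apply_eq_comp, blockOp_apply_fst, blockOp_apply_snd, map_add,
      add_apply] <;> abel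

theorem blockOp_one : blockOp (1 : E →L[ℂ] E) 0 0 1 = 1 := by
  ext x : 1
  apply WithLp.prod_ext <;> simp

theorem blockOp_inj {A B C D A' B' C' D' : E →L[ℂ] E} :
    blockOp A B C D = blockOp A' B' C' D' ↔ A = A' ∧ B = B' ∧ C = C' ∧ D = D' := by
  refine ⟨fun h => ?_, by rintro ⟨rfl, rfl, rfl, rfl⟩; rfl⟩
  have h₁ (v w : E) := congrArg WithLp.fst (DFunLike.congr_fun h (WithLp.toLp 2 (v, w)))
  have h₂ (v w : E) := congrArg WithLp.snd (DFunLike.congr_fun h (WithLp.toLp 2 (v, w)))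
  simp only [blockOp_apply_fst, blockOp_apply_snd, WithLp.toLp_fst, WithLp.toLp_snd] at h₁ h₂
  refine ⟨?_, ?_, ?_, ?_⟩ <;> ext v
  · simpa using h₁ v 0
  · simpa using h₁ 0 v
  · simpa using h₂ v 0
  · simpa using h₂ 0 v

variable [CompleteSpace E]

theorem star_blockOp (A B C D : E →L[ℂ] E) :
    star (blockOp A B C D) = blockOp (star A) (star C) (star B) (star D) := by
  rw [ContinuousLinearMap.star_eq_adjoint, eq_comm, ContinuousLinearMap.eq_adjoint_iff]
  intro x y
  simp only [WithLp.prod_inner_apply, WithLp.ofLp_fst, WithLp.ofLp_snd, blockOp_apply_fst,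
    blockOp_apply_snd, inner_add_left, inner_add_right, ContinuousLinearMap.star_eq_adjoint,
    ContinuousLinearMap.adjoint_inner_left]
  ring

theorem star_blockOp_mul_blockOp_eq_one_iff {A B C D : E →L[ℂ] E} :
    star (blockOp A B C D) * blockOp A B C D = 1 ↔ OrthonormalColumns A B C D := by
  rw [star_blockOp, blockOp_mul, ← blockOp_one, blockOp_inj, OrthonormalColumns]

theorem blockOp_mul_star_blockOp_eq_one_iff {A B C D : E →L[ℂ] E} :
    blockOp A B C D * star (blockOp A B C D) = 1 ↔ OrthonormalRows A B C D := by
  rw [star_blockOp, blockOp_mul, ← blockOp_one, blockOp_inj, OrthonormalRows]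

end BlockOperator

/-- Characterization of `ℍ`-unitaries: a commuting quadruple of normal operators
satisfies the defining equations of an `ℍ`-unitary if and only if it arises as
`(A₂₁, A₁₁, A₂₂, A₁₁A₂₂ − A₁₂A₂₁)` from a `2 × 2` unitary block matrix with
commuting normal entries. -/
theorem hexablock_unitary_iff_block_unitary
    (N₀ N₁ N₂ N₃ : H →L[ℂ] H)
    (hc01 : Commute N₀ N₁) (hc02 : Commute N₀ N₂) (hc03 : Commute N₀ N₃)
    (hc12 : Commute N₁ N₂) (hc13 : Commute N₁ N₃) (hc23 : Commute N₂ N₃)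
    (hn0 : IsStarNormal N₀) (hn1 : IsStarNormal N₁)
    (hn2 : IsStarNormal N₂) (hn3 : IsStarNormal N₃) :
    (star N₃ * N₃ = 1 ∧ N₃ * star N₃ = 1 ∧ N₁ = star N₂ * N₃ ∧ ‖N₁‖ ≤ 1 ∧
      star N₀ * N₀ = 1 - star N₁ * N₁ ∧ N₀ * star N₀ = 1 - N₁ * star N₁) ↔
    (∃ A₁₁ A₁₂ A₂₁ A₂₂ : H →L[ℂ] H,
      (Commute A₁₁ A₁₂ ∧ Commute A₁₁ A₂₁ ∧ Commute A₁₁ A₂₂ ∧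
        Commute A₁₂ A₂₁ ∧ Commute A₁₂ A₂₂ ∧ Commute A₂₁ A₂₂) ∧
      (IsStarNormal A₁₁ ∧ IsStarNormal A₁₂ ∧ IsStarNormal A₂₁ ∧ IsStarNormal A₂₂) ∧
      (star (blockOp A₁₁ A₁₂ A₂₁ A₂₂) * blockOp A₁₁ A₁₂ A₂₁ A₂₂ = 1 ∧
        blockOp A₁₁ A₁₂ A₂₁ A₂₂ * star (blockOp A₁₁ A₁₂ A₂₁ A₂₂) = 1) ∧
      N₀ = A₂₁ ∧ N₁ = A₁₁ ∧ N₂ = A₂₂ ∧ N₃ = A₁₁ * A₂₂ - A₁₂ * A₂₁) := by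
  open StarSubalgebra in
  constructor
  · rintro ⟨h₃, -, h₁, -, h₀, -⟩
    obtain ⟨S, _, m₀, m₁, m₂, m₃⟩ := exists_isMulCommutative_starSubalgebra_of_commute
      hc01 hc02 hc03 hc12 hc13 hc23 hn0 hn1 hn2 hn3
    have mb : -(star N₀ * N₃) ∈ S := neg_mem (mul_mem (star_mem m₀) m₃)
    obtain ⟨hcols, hrows, hdet⟩ := orthonormal_of_hexablock_of_mem m₀ m₁ m₂ m₃ mb h₃ h₁ h₀ rfl
    exact ⟨N₁, -(star N₀ * N₃), N₀, N₂,
      ⟨commute_of_mem m₁ mb, commute_of_mem m₁ m₀, commute_of_mem m₁ m₂,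
        commute_of_mem mb m₀, commute_of_mem mb m₂, commute_of_mem m₀ m₂⟩,
      ⟨isStarNormal_of_mem m₁, isStarNormal_of_mem mb, isStarNormal_of_mem m₀,
        isStarNormal_of_mem m₂⟩,
      ⟨star_blockOp_mul_blockOp_eq_one_iff.mpr hcols,
        blockOp_mul_star_blockOp_eq_one_iff.mpr hrows⟩,
      rfl, rfl, rfl, hdet⟩
  · rintro ⟨A₁₁, A₁₂, A₂₁, A₂₂, ⟨hc₁₁₁₂, hc₁₁₂₁, hc₁₁₂₂, hc₁₂₂₁, hc₁₂₂₂, hc₂₁₂₂⟩,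
      ⟨hn₁₁, hn₁₂, hn₂₁, hn₂₂⟩, ⟨hcols, -⟩, rfl, rfl, rfl, rfl⟩
    rw [star_blockOp_mul_blockOp_eq_one_iff] at hcols
    obtain ⟨S, _, m₁, m₁₂, m₀, m₂⟩ := exists_isMulCommutative_starSubalgebra_of_commute
      hc₁₁₁₂ hc₁₁₂₁ hc₁₁₂₂ hc₁₂₂₁ hc₁₂₂₂ hc₂₁₂₂ hn₁₁ hn₁₂ hn₂₁ hn₂₂
    obtain ⟨hdet, hdet', hadj, hdefect, hdefect'⟩ :=
      hexablock_of_orthonormalColumns_of_mem m₁ m₁₂ m₀ m₂ hcols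
    have hle : star N₁ * N₁ ≤ 1 := hcols.1 ▸ le_add_of_nonneg_right (star_mul_self_nonneg N₀)
    exact ⟨hdet, hdet', hadj, CStarAlgebra.norm_le_one_of_star_mul_self_le_one hle, hdefect,
      hdefect'⟩

end
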